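/- arXiv:1707.02526 — 5 statements merged into one kernel-verified Lean document; each statement's English description precedes it below -/
import Mathlib

section
/- The kissing number of the unit ball in R^3 is at most 8 + 4*sqrt(3), hence at most 14: if n unit balls with pairwise disjoint interiors are all tangent to a fixed unit ball, then n <= 8 + 4*sqrt(3). -/
open Real

open Finset in
noncomputable def kdl (a b : Fin 3) : ℝ := if a = b then 1 else 0

noncomputable def q2l (x : Fin 3 → ℝ) : Fin 3 × Fin 3 → ℝ :=
  fun p => x p.1 * x p.2 - kdl p.1 p.2 * (∑ a, x a ^ 2) / 3

noncomputable def q3l (x : Fin 3 → ℝ) : Fin 3 × Fin 3 × Fin 3 → ℝ :=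
  fun p => x p.1 * x p.2.1 * x p.2.2 - (∑ a, x a ^ 2) / 5 *
    (x p.1 * kdl p.2.1 p.2.2 + x p.2.1 * kdl p.1 p.2.2 + x p.2.2 * kdl p.1 p.2.1)

noncomputable def q4l (x : Fin 3 → ℝ) : Fin 3 × Fin 3 × Fin 3 × Fin 3 → ℝ :=
  fun p =>
    x p.1 * x p.2.1 * x p.2.2.1 * x p.2.2.2
      - (∑ i, x i ^ 2) / 7 *
        (x p.1 * x p.2.1 * kdl p.2.2.1 p.2.2.2 + x p.1 * x p.2.2.1 * kdl p.2.1 p.2.2.2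
          + x p.1 * x p.2.2.2 * kdl p.2.1 p.2.2.1 + x p.2.1 * x p.2.2.1 * kdl p.1 p.2.2.2
          + x p.2.1 * x p.2.2.2 * kdl p.1 p.2.2.1 + x p.2.2.1 * x p.2.2.2 * kdl p.1 p.2.1)
      + (∑ i, x i ^ 2) ^ 2 / 35 *
        (kdl p.1 p.2.1 * kdl p.2.2.1 p.2.2.2 + kdl p.1 p.2.2.1 * kdl p.2.1 p.2.2.2
          + kdl p.1 p.2.2.2 * kdl p.2.1 p.2.2.1)

private theorem point2l (x y : Fin 3 → ℝ) :
    ∑ p : Fin 3 × Fin 3, q2l x p * q2l y p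
      = (∑ a, x a * y a)^2 - (∑ a, x a ^ 2) * (∑ a, y a ^ 2) / 3 := by
  simp only [q2l, kdl, Fintype.sum_prod_type, Fin.sum_univ_three, Fin.reduceEq, if_false, if_true,
    reduceIte]
  ring

private theorem point3l (x y : Fin 3 → ℝ) :
    ∑ p : Fin 3 × Fin 3 × Fin 3, q3l x p * q3l y p
      = (∑ a, x a * y a)^3
        - 3/5 * (∑ a, x a * y a) * ((∑ a, x a ^ 2) * (∑ a, y a ^ 2)) := by
  simp only [q3l, kdl, Fintype.sum_prod_type, Fin.sum_univ_three, Fin.reduceEq, if_false, if_true,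
    reduceIte]
  ring

set_option maxHeartbeats 1000000 in
private theorem point4l (x y : Fin 3 → ℝ) :
    ∑ p : Fin 3 × Fin 3 × Fin 3 × Fin 3, q4l x p * q4l y p
      = (∑ a, x a * y a)^4
        - 6/7 * (∑ a, x a * y a)^2 * ((∑ a, x a ^ 2) * (∑ a, y a ^ 2))
        + 3/35 * ((∑ a, x a ^ 2) * (∑ a, y a ^ 2))^2 := by
  simp only [q4l, kdl, Fintype.sum_prod_type, Fin.sum_univ_three, Fin.reduceEq, if_false, if_true,
    reduceIte]
  ring

open Finset in
private theorem swap_sq' {ι κ : Type*} [Fintype ι] [Fintype κ] (f : ι → κ → ℝ) :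
    ∑ i, ∑ j, ∑ a, f i a * f j a = ∑ a, (∑ i, f i a)^2 := by
  calc ∑ i, ∑ j, ∑ a, f i a * f j a
      = ∑ i, ∑ a, ∑ j, f i a * f j a := Finset.sum_congr rfl fun i _ => Finset.sum_comm
    _ = ∑ a, ∑ i, ∑ j, f i a * f j a := Finset.sum_comm
    _ = ∑ a, (∑ i, f i a)^2 := by
        refine Finset.sum_congr rfl fun a _ => ?_
        rw [sq, Finset.sum_mul_sum]

open Finset in
private theorem main_bound (n : ℕ) (u : Fin n → Fin 3 → ℝ)
    (h1 : ∀ i, ∑ a, u i a ^ 2 = 1)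
    (h2 : ∀ i j, i ≠ j → ∑ a, u i a * u j a ≤ 1/2) : (n : ℝ) ≤ 14 := by
  set t : Fin n → Fin n → ℝ := fun i j => ∑ a, u i a * u j a with ht
  have htd : ∀ i, t i i = 1 := by
    intro i
    calc t i i = ∑ a, u i a ^ 2 := Finset.sum_congr rfl fun a _ => by ring
      _ = 1 := h1 i
  have htlb : ∀ i j, -1 ≤ t i j := by
    intro i j
    have hi := h1 i; have hj := h1 j
    simp only [Fin.sum_univ_three] at hi hj
    simp only [ht, Fin.sum_univ_three]
    nlinarith [sq_nonneg (u i 0 * u j 1 - u i 1 * u j 0),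
      sq_nonneg (u i 0 * u j 2 - u i 2 * u j 0),
      sq_nonneg (u i 1 * u j 2 - u i 2 * u j 1),
      sq_nonneg (u i 0 * u j 0 + u i 1 * u j 1 + u i 2 * u j 2 + 1)]
  -- PSD inequalities
  have P1 : (0:ℝ) ≤ ∑ i, ∑ j, t i j := by
    have := swap_sq' u
    simp only [ht]
    rw [this]
    positivity
  have P2 : (0:ℝ) ≤ ∑ i, ∑ j, (t i j ^ 2 - 1/3) := by
    have hs := swap_sq' (fun i => q2l (u i))
    have : ∑ i, ∑ j, (t i j ^ 2 - 1/3) = ∑ p, (∑ i, q2l (u i) p)^2 := by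
      rw [← hs]
      refine Finset.sum_congr rfl fun i _ => Finset.sum_congr rfl fun j _ => ?_
      rw [point2l, h1 i, h1 j]; ring
    rw [this]; positivity
  have P3 : (0:ℝ) ≤ ∑ i, ∑ j, (t i j ^ 3 - 3/5 * t i j) := by
    have hs := swap_sq' (fun i => q3l (u i))
    have : ∑ i, ∑ j, (t i j ^ 3 - 3/5 * t i j) = ∑ p, (∑ i, q3l (u i) p)^2 := by
      rw [← hs]
      refine Finset.sum_congr rfl fun i _ => Finset.sum_congr rfl fun j _ => ?_
      rw [point3l, h1 i, h1 j]; ring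
    rw [this]; positivity
  have P4 : (0:ℝ) ≤ ∑ i, ∑ j, (t i j ^ 4 - 6/7 * t i j ^ 2 + 3/35) := by
    have hs := swap_sq' (fun i => q4l (u i))
    have : ∑ i, ∑ j, (t i j ^ 4 - 6/7 * t i j ^ 2 + 3/35) = ∑ p, (∑ i, q4l (u i) p)^2 := by
      rw [← hs]
      refine Finset.sum_congr rfl fun i _ => Finset.sum_congr rfl fun j _ => ?_
      rw [point4l, h1 i, h1 j]; ring
    rw [this]; positivity
  -- the polynomial
  set F : ℝ → ℝ := fun s => s^4 + 13/10*s^3 + 3/50*s^2 - 8/25*s - 2/25 with hF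
  -- lower bound on the double sum
  have low : 7/50 * (n:ℝ)^2 ≤ ∑ i, ∑ j, F (t i j) := by
    have e : ∑ i, ∑ j, F (t i j)
        - (∑ i, ∑ j, (t i j ^ 4 - 6/7 * t i j ^ 2 + 3/35))
        - 13/10 * (∑ i, ∑ j, (t i j ^ 3 - 3/5 * t i j))
        - 321/350 * (∑ i, ∑ j, (t i j ^ 2 - 1/3))
        - 23/50 * (∑ i, ∑ j, t i j) = 7/50 * (n:ℝ)^2 := by
      simp only [Finset.mul_sum, ← Finset.sum_sub_distrib]
      have : ∀ i : Fin n, ∑ j, (F (t i j) - (t i j ^ 4 - 6/7 * t i j ^ 2 + 3/35)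
          - 13/10 * (t i j ^ 3 - 3/5 * t i j) - 321/350 * (t i j ^ 2 - 1/3)
          - 23/50 * t i j) = ∑ _j : Fin n, (7/50 : ℝ) := by
        intro i
        refine Finset.sum_congr rfl fun j _ => ?_
        simp only [hF]; ring
      rw [Finset.sum_congr rfl fun i _ => this i]
      simp [Finset.sum_const]
      ring
    linarith [P1, P2, P3, P4]
  -- upper bound
  have hFneg : ∀ i j, i ≠ j → F (t i j) ≤ 0 := by
    intro i j hij
    have hub := h2 i j hij
    have hlb := htlb i j
    have key : F (t i j) = (t i j + 1) * (t i j - 1/2) * (t i j + 2/5)^2 := by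
      simp only [hF]; ring
    rw [key]
    have h1' : (0:ℝ) ≤ t i j + 1 := by linarith
    have h2' : t i j - 1/2 ≤ 0 := by
      have : t i j ≤ 1/2 := hub
      linarith
    have h3' : (0:ℝ) ≤ (t i j + 1) * (t i j + 2/5)^2 := mul_nonneg h1' (sq_nonneg _)
    calc (t i j + 1) * (t i j - 1/2) * (t i j + 2/5)^2
        = (t i j - 1/2) * ((t i j + 1) * (t i j + 2/5)^2) := by ring
      _ ≤ 0 := mul_nonpos_of_nonpos_of_nonneg h2' h3'
  have high : ∑ i, ∑ j, F (t i j) ≤ (n:ℝ) * (49/25) := by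
    have : ∀ i : Fin n, ∑ j, F (t i j) ≤ 49/25 := by
      intro i
      have hsplit : ∑ j, F (t i j) = F (t i i) + ∑ j ∈ Finset.univ.erase i, F (t i j) := by
        rw [← Finset.add_sum_erase _ _ (Finset.mem_univ i)]
      rw [hsplit, htd i]
      have hFone : F 1 = 49/25 := by simp only [hF]; norm_num
      have : ∑ j ∈ Finset.univ.erase i, F (t i j) ≤ 0 :=
        Finset.sum_nonpos fun j hj => hFneg i j (Finset.ne_of_mem_erase hj).symm
      linarith
    calc ∑ i, ∑ j, F (t i j) ≤ ∑ _i : Fin n, (49/25 : ℝ) := Finset.sum_le_sum fun i _ => this i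
      _ = (n:ℝ) * (49/25) := by simp [Finset.sum_const]
  -- conclude
  have : 7/50 * (n:ℝ)^2 ≤ (n:ℝ) * (49/25) := le_trans low high
  rcases Nat.eq_zero_or_pos n with h0 | hpos
  · simp [h0]
  · have hn : (0:ℝ) < n := by exact_mod_cast hpos
    nlinarith

/-- if `n` unit balls with pairwise disjoint interiors are all
tangent to a fixed unit ball (center `o`), then `n ≤ 8 + 4√3`, hence `n ≤ 14`. -/
theorem stmt1 (n : ℕ) (o : EuclideanSpace ℝ (Fin 3))
    (c : Fin n → EuclideanSpace ℝ (Fin 3))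
    (htan : ∀ i, dist (c i) o = 2)
    (hpack : ∀ i j, i ≠ j → 2 ≤ dist (c i) (c j)) :
    (n : ℝ) ≤ 8 + 4 * Real.sqrt 3 ∧ n ≤ 14 := by
  have hdist : ∀ (x y : EuclideanSpace ℝ (Fin 3)), dist x y ^ 2 = ∑ a, (x a - y a)^2 := by
    intro x y
    rw [EuclideanSpace.dist_eq, Real.sq_sqrt (by positivity)]
    refine Finset.sum_congr rfl fun a _ => by rw [Real.dist_eq, sq_abs]
  set u : Fin n → Fin 3 → ℝ := fun i a => (c i a - o a) / 2 with hu
  have h1 : ∀ i, ∑ a, u i a ^ 2 = 1 := by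
    intro i
    have h4 : ∑ a, (c i a - o a)^2 = 4 := by
      rw [← hdist, htan i]; norm_num
    simp only [hu, Fin.sum_univ_three] at h4 ⊢
    nlinarith [h4]
  have h2 : ∀ i j, i ≠ j → ∑ a, u i a * u j a ≤ 1/2 := by
    intro i j hij
    have h4 : 4 ≤ ∑ a, (c i a - c j a)^2 := by
      rw [← hdist]
      nlinarith [hpack i j hij, dist_nonneg (x := c i) (y := c j)]
    have e1 := h1 i; have e2 := h1 j
    simp only [hu, Fin.sum_univ_three] at h4 e1 e2 ⊢
    nlinarith [h4, e1, e2]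
  have hn14 : (n : ℝ) ≤ 14 := main_bound n u h1 h2
  have hsqrt : (3:ℝ)/2 ≤ Real.sqrt 3 := by
    nlinarith [Real.sq_sqrt (by norm_num : (0:ℝ) ≤ 3), Real.sqrt_nonneg 3]
  refine ⟨by linarith, ?_⟩
  exact_mod_cast hn14.trans (by norm_num : (14:ℝ) ≤ 14)
end

section
/- Height identity (Lemma on cap heights): for externally tangent balls B1, B2 of radii r1, r2 and 1 < rho < 3, if both caps S_rho(B1) ∩ B2 and S_rho(B2) ∩ B1 are nonempty with heights h1 and h2, then h1/(rho*r1) + h2/(rho*r2) = (-rho^2 + 4*rho - 3)/(2*rho). -/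
/-- height identity.  For externally tangent balls of radii
`r1, r2 > 0` and `1 < ρ < 3` with both caps `S_ρ(B1) ∩ B2` and `S_ρ(B2) ∩ B1`
nonempty, the cap heights `h1 = ρ*r1*(1 - cos α)` and `h2 = ρ*r2*(1 - cos β)`
(with the cosines given by the angular radius formula) satisfy
`h1/(ρ*r1) + h2/(ρ*r2) = (-ρ² + 4ρ - 3)/(2ρ)`. -/
theorem stmt4 (r1 r2 ρ h1 h2 : ℝ) (hr1 : 0 < r1) (hr2 : 0 < r2)
    (hρ1 : 1 < ρ) (hρ3 : ρ < 3)
    (hne1 : ρ * r1 ≤ r1 + 2 * r2) (hne2 : ρ * r2 ≤ r2 + 2 * r1)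
    (hh1 : h1 = ρ * r1 * (1 - ((ρ ^ 2 + 1) * r1 + 2 * r2) / (2 * ρ * (r1 + r2))))
    (hh2 : h2 = ρ * r2 * (1 - ((ρ ^ 2 + 1) * r2 + 2 * r1) / (2 * ρ * (r1 + r2)))) :
    h1 / (ρ * r1) + h2 / (ρ * r2) = (-ρ ^ 2 + 4 * ρ - 3) / (2 * ρ) := by
  have hρ : (0:ℝ) < ρ := by linarith
  have hs : (0:ℝ) < r1 + r2 := by linarith
  subst hh1 hh2
  have h1 : ρ * r1 ≠ 0 := by positivity
  have h2 : ρ * r2 ≠ 0 := by positivity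
  field_simp
  ring
end

section
/- Minimum of cap-area sum for congruent balls: for fixed rho in (1,3) and fixed dimension d >= 3, among all pairs of externally tangent balls X, Y with both caps S_rho(X) ∩ Y and S_rho(Y) ∩ X nonempty, the quantity a(X,Y) + a(Y,X) (sum of fractional cap areas) is minimized when X and Y have equal radii, at which point both caps have angular radius alpha with cos(alpha) = (rho^2+3)/(4*rho). -/
/-!
Substituting `t = 1 - s²` turns `∫₀^{1-a²} t^p (1-t)^{-1/2} dt` into `∫ₐ¹ 2(1-s²)^p ds`, so the
cap-area sum is `g(x) = ∫ₓ¹ h + ∫_{C-x}¹ h` with `h(s) = 2(1-s²)^p`, and `g(C - x) = g(x)`.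
For `x ≥ C/2`, `g(x) - g(C/2) = ∫_{C/2}^x (h(C-s) - h(s)) ds ≥ 0`, because `|C - s| ≤ s` there
and `h` decreases in `|s|`.
-/

open intervalIntegral Set

noncomputable def capDensity (p s : ℝ) : ℝ := 2 * (1 - s ^ 2) ^ p

lemma continuous_capDensity {p : ℝ} (hp : 0 ≤ p) : Continuous (capDensity p) :=
  continuous_const.mul ((continuous_const.sub (continuous_pow 2)).rpow_const fun _ => Or.inr hp)

lemma capDensity_le_of_sq_le {p s u : ℝ} (hp : 0 ≤ p) (hs : s ^ 2 ≤ 1) (hus : u ^ 2 ≤ s ^ 2) :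
    capDensity p s ≤ capDensity p u :=
  mul_le_mul_of_nonneg_left (Real.rpow_le_rpow (by linarith) (by linarith) hp) zero_le_two

lemma integral_rpow_mul_one_sub_rpow_neg_half_eq {p a : ℝ} (hp : 0 ≤ p) (ha0 : 0 < a)
    (ha1 : a ≤ 1) :
    (∫ t in (0:ℝ)..(1 - a ^ 2), t ^ p * (1 - t) ^ (-(1:ℝ)/2)) = ∫ s in a..1, capDensity p s := by
  have hpos : ∀ s ∈ uIcc 1 a, 0 < s := fun s hs => ha0.trans_le (uIcc_of_ge ha1 ▸ hs).1
  have hcont : ContinuousOn (fun t : ℝ => t ^ p * (1 - t) ^ (-(1:ℝ)/2))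
      ((fun s => 1 - s ^ 2) '' uIcc 1 a) := by
    rintro _ ⟨s, hs, rfl⟩
    refine ((Real.continuousAt_rpow_const _ _ (Or.inr hp)).mul
      (ContinuousAt.rpow_const (by fun_prop) (Or.inl ?_))).continuousWithinAt
    simpa using (hpos s hs).ne'
  have hsubst := integral_comp_mul_deriv' (a := 1) (b := a) (f' := fun s => -(2 * s))
    (fun s _ => by simpa using (hasDerivAt_pow 2 s).const_sub 1) (by fun_prop) hcont
  have hpointwise : EqOn (fun s => ((fun t : ℝ => t ^ p * (1 - t) ^ (-(1:ℝ)/2)) ∘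
      (fun s => 1 - s ^ 2)) s * -(2 * s)) (fun s => -capDensity p s) (uIcc 1 a) := by
    intro s hs
    have hs_inv : (s ^ 2) ^ (-(1:ℝ)/2) = s⁻¹ := by
      rw [← Real.rpow_natCast, ← Real.rpow_mul (hpos s hs).le]
      norm_num [Real.rpow_neg_one]
    simp only [Function.comp, sub_sub_cancel, hs_inv, capDensity]
    field_simp [(hpos s hs).ne']
  rw [one_pow, sub_self, integral_congr hpointwise, integral_neg, integral_symm, neg_neg]
    at hsubst
  exact hsubst.symm

lemma integral_add_integral_reflect_le {h : ℝ → ℝ} (hh : Continuous h) {C x b : ℝ}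
    (hx : C / 2 ≤ x) (hle : ∀ s ∈ Icc (C / 2) x, h s ≤ h (C - s)) :
    2 * ∫ s in (C / 2)..b, h s ≤ (∫ s in x..b, h s) + ∫ s in (C - x)..b, h s := by
  have hint : ∀ a b : ℝ, IntervalIntegrable h MeasureTheory.volume a b :=
    fun a b => hh.intervalIntegrable a b
  have hsplit := integral_add_adjacent_intervals (hint (C / 2) x) (hint x b)
  have hsplit' := integral_add_adjacent_intervals (hint (C - x) (C / 2)) (hint (C / 2) b)
  have hreflect : (∫ s in (C - x)..(C / 2), h s) = ∫ s in (C / 2)..x, h (C - s) := by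
    rw [integral_comp_sub_left h C, sub_half]
  have hmono : (∫ s in (C / 2)..x, h s) ≤ ∫ s in (C / 2)..x, h (C - s) :=
    integral_mono_on hx (hint _ _)
      ((hh.comp (continuous_const.sub continuous_id)).intervalIntegrable _ _) hle
  linarith

/-- minimum of the cap-area sum for congruent balls.  For fixed
`ρ ∈ (1,3)` and dimension `d ≥ 3`, with `C = (ρ²+3)/(2ρ)` the constraint on
the cosines of the cap angular radii, the normalized cap-area sum
`g(x) = ∫₀^{1-x²} t^{(d-3)/2}(1-t)^{-1/2} dt + ∫₀^{1-(C-x)²} t^{(d-3)/2}(1-t)^{-1/2} dt`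
is minimized on `[C-1, 1]` at `x = C/2`, i.e. when the two balls are congruent;
there `cos α = (ρ²+3)/(4ρ)` for both caps. -/
theorem stmt9 (d : ℕ) (hd : 3 ≤ d) (ρ : ℝ) (hρ1 : 1 < ρ) (hρ3 : ρ < 3)
    (C : ℝ) (hC : C = (ρ ^ 2 + 3) / (2 * ρ))
    (g : ℝ → ℝ)
    (hg : ∀ x, g x =
      (∫ t in (0:ℝ)..(1 - x ^ 2), t ^ (((d:ℝ) - 3) / 2) * (1 - t) ^ (-(1:ℝ)/2)) +
      (∫ t in (0:ℝ)..(1 - (C - x) ^ 2), t ^ (((d:ℝ) - 3) / 2) * (1 - t) ^ (-(1:ℝ)/2))) :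
    (∀ x ∈ Set.Icc (C - 1) 1, g (C / 2) ≤ g x) ∧ C / 2 = (ρ ^ 2 + 3) / (4 * ρ) := by
  set p := ((d:ℝ) - 3) / 2
  have hp : 0 ≤ p := div_nonneg (by linarith [show (3:ℝ) ≤ d by exact_mod_cast hd]) zero_le_two
  have hρ0 : 0 < ρ := by linarith
  have hC1 : 1 < C := by
    rw [hC, lt_div_iff₀ (by positivity)]
    nlinarith
  have hC2 : C < 2 := by
    rw [hC, div_lt_iff₀ (by positivity)]
    nlinarith
  have hg_eq : ∀ x ∈ Icc (C - 1) 1,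
      g x = (∫ s in x..1, capDensity p s) + ∫ s in (C - x)..1, capDensity p s := by
    intro x ⟨hx1, hx2⟩
    rw [hg x, integral_rpow_mul_one_sub_rpow_neg_half_eq hp (by linarith) hx2,
      integral_rpow_mul_one_sub_rpow_neg_half_eq hp (by linarith) (by linarith)]
  have hg_symm : ∀ x, g (C - x) = g x := fun x => by
    rw [hg, hg, sub_sub_cancel, add_comm]
  have hg_right : ∀ x ∈ Icc (C / 2) 1, g (C / 2) ≤ g x := by
    intro x ⟨hx1, hx2⟩
    rw [hg_eq x ⟨by linarith, hx2⟩, hg_eq (C / 2) ⟨by linarith, by linarith⟩, sub_half, ← two_mul]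
    refine integral_add_integral_reflect_le (continuous_capDensity hp) hx1 fun s hs => ?_
    exact capDensity_le_of_sq_le hp (by nlinarith [hs.1, hs.2]) (by nlinarith [hs.1, hs.2])
  refine ⟨fun x hx => ?_, by rw [hC]; ring⟩
  rcases le_total (C / 2) x with hx' | hx'
  · exact hg_right x ⟨hx', hx.2⟩
  · rw [← hg_symm x]
    exact hg_right (C - x) ⟨by linarith, by linarith [hx.1]⟩
end

section
/- Conditional bound k_3 <= inf over rho in (1,3) of (8*rho/(-rho^2+4*rho-3)) * dens(rho): if every packing of balls tangent to a ball B covers at most fraction dens(rho) of the area of S_rho(B), then every contact graph G of a ball packing in R^3 satisfies 2|E|/|V| <= (8*rho/(-rho^2+4*rho-3)) * dens(rho). -/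
/-! Double counting over ordered pairs of tangent balls: each edge receives charge at least
`c = (-ρ² + 4ρ - 3)/(4ρ) > 0` from its two orientations and each ball sends out at most `dens`,
so `c · 2|E| ≤ 2 · dens · |V|`. -/

open Finset

/-- The contact graph of a ball packing: balls indexed by `ι`, with centers
`o` and radii `r`; two distinct balls are adjacent iff they are tangent. -/
def contactGraph {ι : Type*} (o : ι → EuclideanSpace ℝ (Fin 3)) (r : ι → ℝ) :
    SimpleGraph ι where
  Adj i j := i ≠ j ∧ dist (o i) (o j) = r i + r j
  symm := by
    constructor
    intro i j ⟨hne, hd⟩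
    exact ⟨hne.symm, by rwa [dist_comm, add_comm]⟩
  loopless := by constructor; intro i ⟨hne, _⟩; exact hne rfl

namespace SimpleGraph

variable {V : Type*} [Fintype V] (G : SimpleGraph V) [DecidableRel G.Adj]

theorem sum_sum_neighborFinset_swap {M : Type*} [AddCommMonoid M] (f : V → V → M) :
    ∑ i, ∑ j ∈ G.neighborFinset i, f j i = ∑ i, ∑ j ∈ G.neighborFinset i, f i j := by
  simp only [neighborFinset_eq_filter, sum_filter]
  rw [sum_comm]
  simp only [G.adj_comm]

theorem mul_two_mul_card_edgeFinset_le {c d : ℝ} (a : V → V → ℝ)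
    (hedge : ∀ i j, G.Adj i j → c ≤ a i j + a j i)
    (hvert : ∀ i, ∑ j ∈ G.neighborFinset i, a i j ≤ d) :
    c * (2 * #G.edgeFinset) ≤ 2 * (d * Fintype.card V) := by
  have hdeg : ∑ i, (G.degree i : ℝ) = 2 * #G.edgeFinset := by
    exact_mod_cast G.sum_degrees_eq_twice_card_edges
  calc c * (2 * #G.edgeFinset : ℝ) = ∑ i, ∑ _j ∈ G.neighborFinset i, c := by
        simp [← hdeg, mul_sum, mul_comm]
    _ ≤ ∑ i, ∑ j ∈ G.neighborFinset i, (a i j + a j i) :=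
        sum_le_sum fun i _ ↦ sum_le_sum fun j hj ↦ hedge i j ((G.mem_neighborFinset i j).1 hj)
    _ = 2 * ∑ i, ∑ j ∈ G.neighborFinset i, a i j := by
        simp only [sum_add_distrib]
        rw [G.sum_sum_neighborFinset_swap (fun j i ↦ a j i), two_mul]
    _ ≤ 2 * ∑ _i : V, d := by gcongr with i; exact hvert i
    _ = 2 * (d * Fintype.card V) := by simp [mul_comm]

end SimpleGraph

theorem stmt13_general {ι : Type*} [Fintype ι]
    (o : ι → EuclideanSpace ℝ (Fin 3)) (r : ι → ℝ)
    (ρ : ℝ) (hρ1 : 1 < ρ) (hρ3 : ρ < 3)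
    [DecidableRel (contactGraph o r).Adj]
    (dens : ℝ) (a : ι → ι → ℝ)
    (h1 : ∀ i j, (contactGraph o r).Adj i j →
      (-ρ ^ 2 + 4 * ρ - 3) / (4 * ρ) ≤ a i j + a j i)
    (h2 : ∀ i, ∑ j ∈ Finset.univ.filter (fun j => (contactGraph o r).Adj i j),
      a i j ≤ dens) :
    2 * ((contactGraph o r).edgeFinset.card : ℝ) ≤
      (8 * ρ / (-ρ ^ 2 + 4 * ρ - 3)) * dens * (Fintype.card ι : ℝ) := by
  have hc : 0 < (-ρ ^ 2 + 4 * ρ - 3) / (4 * ρ) := div_pos (by nlinarith) (by linarith)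
  have key := (contactGraph o r).mul_two_mul_card_edgeFinset_le a h1
    (fun i ↦ by simpa only [SimpleGraph.neighborFinset_eq_filter] using h2 i)
  rw [← le_div_iff₀' hc] at key
  exact key.trans_eq (by rw [div_div_eq_mul_div]; ring)

/-- conditional bound on the average degree of contact graphs in ℝ³.
Given a ball packing (positive radii, pairwise disjoint interiors), `ρ ∈ (1,3)`,
and a function `a i j` (the fraction of the area of `S_ρ(B_i)` covered by `B_j`)
satisfying (1) for tangent balls `a i j + a j i ≥ (-ρ²+4ρ-3)/(4ρ)`, and
(2) for each ball `i`, the sum of `a i j` over balls tangent to `i` is at most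
`dens`, the contact graph `G = (V,E)` satisfies
`2|E| ≤ (8ρ/(-ρ²+4ρ-3))·dens·|V|`. -/
theorem stmt13 {ι : Type*} [Fintype ι] [DecidableEq ι] [Nonempty ι]
    (o : ι → EuclideanSpace ℝ (Fin 3)) (r : ι → ℝ)
    (hr : ∀ i, 0 < r i)
    (hpack : ∀ i j, i ≠ j → r i + r j ≤ dist (o i) (o j))
    (ρ : ℝ) (hρ1 : 1 < ρ) (hρ3 : ρ < 3)
    [DecidableRel (contactGraph o r).Adj]
    (dens : ℝ) (a : ι → ι → ℝ)
    (ha_nonneg : ∀ i j, 0 ≤ a i j)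
    (h1 : ∀ i j, (contactGraph o r).Adj i j →
      (-ρ ^ 2 + 4 * ρ - 3) / (4 * ρ) ≤ a i j + a j i)
    (h2 : ∀ i, ∑ j ∈ Finset.univ.filter (fun j => (contactGraph o r).Adj i j),
      a i j ≤ dens) :
    2 * ((contactGraph o r).edgeFinset.card : ℝ) ≤
      (8 * ρ / (-ρ ^ 2 + 4 * ρ - 3)) * dens * (Fintype.card ι : ℝ) :=
  stmt13_general o r ρ hρ1 hρ3 dens a h1 h2
end

section
/- Area function K on [alpha_0, alpha_max]: for rho in (1,3) and alpha in [alpha_0, alpha_max] with alpha_0 = arccos((3*rho^2+1)/(rho*(rho^2+3))) and alpha_max = arccos(1/rho), the actual cap and the auxiliary cap coincide and K(alpha) = 2*pi*(1 - cos(alpha)); moreover for alpha in [alpha_min, alpha_0], K(alpha) = 2*pi*(1 - ((rho^2-1)*( (1/rho)*cos(alpha) - sqrt(1 - 1/rho^2)*sin(alpha) + 1) + 4)/(4*rho)), and K is non-decreasing and continuous at alpha_0. -/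
/-!
Write `β = arccos (1/ρ)`. The factor `(1/ρ) cos α - √(1 - 1/ρ²) sin α` is `cos (α + β)`, so on
`[α_min, α₀]` the area is an increasing affine function of `-cos (α + β)` with `α + β ∈ [0, π]`,
while on `[α₀, α_max] ⊆ [0, π]` it is an increasing affine function of `-cos α`. The two pieces
agree at `α₀` because `sin α₀ = (ρ² - 1)^{3/2} / (ρ (ρ² + 3))` gives
`cos (α₀ + β) = (5 - ρ²) / (ρ² + 3)`.
-/

open Real Set

theorem cos_add_arccos {x : ℝ} (hx₁ : -1 ≤ x) (hx₂ : x ≤ 1) (α : ℝ) :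
    cos (α + arccos x) = x * cos α - √(1 - x ^ 2) * sin α := by
  rw [cos_add, cos_arccos hx₁ hx₂, sin_arccos]
  ring

theorem antitoneOn_cos_add (φ : ℝ) : AntitoneOn (fun α => cos (α + φ)) (Icc (-φ) (π - φ)) :=
  fun x hx y hy hxy => antitoneOn_cos ⟨by linarith [hx.1], by linarith [hx.2]⟩
    ⟨by linarith [hy.1], by linarith [hy.2]⟩ (by linarith)

theorem monotoneOn_ite_Icc {α β : Type*} [LinearOrder α] [Preorder β] {f g : α → β} {a b c : α}
    (hf : MonotoneOn f (Icc a b)) (hg : MonotoneOn g (Icc b c)) (hfg : f b = g b) :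
    MonotoneOn (fun x => if x < b then f x else g x) (Icc a c) := by
  intro x hx y hy hxy
  rcases lt_or_ge y b with hyb | hby
  · have hxb : x < b := lt_of_le_of_lt hxy hyb
    simp only [if_pos hxb, if_pos hyb]
    exact hf ⟨hx.1, hxb.le⟩ ⟨hx.1.trans hxy, hyb.le⟩ hxy
  rcases lt_or_ge x b with hxb | hbx
  · simp only [if_pos hxb, if_neg (not_lt.2 hby)]
    calc f x ≤ f b := hf ⟨hx.1, hxb.le⟩ ⟨hx.1.trans hxb.le, le_rfl⟩ hxb.le
      _ = g b := hfg
      _ ≤ g y := hg ⟨le_rfl, hby.trans hy.2⟩ ⟨hby, hy.2⟩ hby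
  · simp only [if_neg (not_lt.2 hbx), if_neg (not_lt.2 hby)]
    exact hg ⟨hbx, hxy.trans hy.2⟩ ⟨hby, hy.2⟩ hxy

theorem continuous_ite_lt {α β : Type*} [TopologicalSpace α] [LinearOrder α] [OrderClosedTopology α]
    [TopologicalSpace β] {f g : α → β} {b : α} (hf : Continuous f) (hg : Continuous g)
    (hfg : f b = g b) : Continuous fun x => if x < b then f x else g x := by
  have h := Continuous.if_le hg hf continuous_const continuous_id
    (fun x (hx : b = x) => hx ▸ hfg.symm)
  refine h.congr fun x => ?_
  by_cases hx : x < b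
  · simp [hx, not_le.2 hx]
  · simp [hx, not_lt.1 hx]

noncomputable def sphericalCapArea (α : ℝ) : ℝ := 2 * π * (1 - cos α)

/-- With `u = cos (α + arccos (1/ρ))` the tangent ball has radius `r' = 2 / (u + 1) - 1`, and the
cosine `((ρ² + 1) + 2 r') / (2 ρ (1 + r'))` of the actual cap radius simplifies to
`((ρ² - 1) (u + 1) + 4) / (4 ρ)`. -/
noncomputable def tangentCapArea (ρ α : ℝ) : ℝ :=
  2 * π * (1 - ((ρ ^ 2 - 1) * (cos (α + arccos (1 / ρ)) + 1) + 4) / (4 * ρ))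

theorem tangentCapArea_eq {ρ : ℝ} (hρ : 1 ≤ ρ) (α : ℝ) :
    tangentCapArea ρ α = 2 * π * (1 - ((ρ ^ 2 - 1) *
      ((1 / ρ) * cos α - √(1 - 1 / ρ ^ 2) * sin α + 1) + 4) / (4 * ρ)) := by
  have hρ' : 1 / ρ ≤ 1 := by rw [div_le_one (by linarith)]; exact hρ
  rw [tangentCapArea, cos_add_arccos (by linarith [one_div_nonneg.2 (zero_le_one.trans hρ)]) hρ',
    one_div_pow]

theorem continuous_sphericalCapArea : Continuous sphericalCapArea := by
  unfold sphericalCapArea; fun_prop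

theorem continuous_tangentCapArea (ρ : ℝ) : Continuous (tangentCapArea ρ) := by
  unfold tangentCapArea; fun_prop

theorem monotoneOn_sphericalCapArea : MonotoneOn sphericalCapArea (Icc 0 π) := by
  have h : Antitone fun u : ℝ => 2 * π * (1 - u) := fun u v huv => by
    have := pi_pos; nlinarith
  exact h.comp_antitoneOn antitoneOn_cos

theorem monotoneOn_tangentCapArea {ρ : ℝ} (hρ : 1 ≤ ρ) :
    MonotoneOn (tangentCapArea ρ) (Icc (-arccos (1 / ρ)) (π - arccos (1 / ρ))) := by
  have h : Antitone fun u : ℝ => 2 * π * (1 - ((ρ ^ 2 - 1) * (u + 1) + 4) / (4 * ρ)) :=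
    fun u v huv => by
      have : 0 ≤ ρ ^ 2 - 1 := by nlinarith
      have := pi_pos
      dsimp only
      gcongr
  exact h.comp_antitoneOn (antitoneOn_cos_add _)

theorem cos_arccos_three_mul_sq_add_one_div {ρ : ℝ} (hρ : 1 ≤ ρ) :
    cos (arccos ((3 * ρ ^ 2 + 1) / (ρ * (ρ ^ 2 + 3)))) = (3 * ρ ^ 2 + 1) / (ρ * (ρ ^ 2 + 3)) := by
  have hρ0 : 0 < ρ := by linarith
  have hc₀ : 0 ≤ (3 * ρ ^ 2 + 1) / (ρ * (ρ ^ 2 + 3)) := by positivity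
  have hc₁ : (3 * ρ ^ 2 + 1) / (ρ * (ρ ^ 2 + 3)) ≤ 1 := by
    rw [div_le_one (by positivity)]; nlinarith [pow_nonneg (sub_nonneg.2 hρ) 3]
  exact cos_arccos (by linarith) hc₁

theorem cos_arccos_add_arccos_inv {ρ : ℝ} (hρ : 1 ≤ ρ) :
    cos (arccos ((3 * ρ ^ 2 + 1) / (ρ * (ρ ^ 2 + 3))) + arccos (1 / ρ)) =
      (5 - ρ ^ 2) / (ρ ^ 2 + 3) := by
  have hρ0 : 0 < ρ := by linarith
  have hinv₀ : 0 ≤ 1 / ρ := by positivity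
  have hinv₁ : 1 / ρ ≤ 1 := by rw [div_le_one hρ0]; exact hρ
  set c := (3 * ρ ^ 2 + 1) / (ρ * (ρ ^ 2 + 3)) with hc
  -- `ρ² (ρ² + 3)² - (3ρ² + 1)² = (ρ² - 1)³`, so `1 - c²` is `(ρ² - 1)³ / (ρ (ρ² + 3))²`
  have hsqrt : √(1 - (1 / ρ) ^ 2) * √(1 - c ^ 2) = (ρ ^ 2 - 1) ^ 2 / (ρ ^ 2 * (ρ ^ 2 + 3)) := by
    rw [← sqrt_mul (by nlinarith),
      show (1 - (1 / ρ) ^ 2) * (1 - c ^ 2) = ((ρ ^ 2 - 1) ^ 2 / (ρ ^ 2 * (ρ ^ 2 + 3))) ^ 2 by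
        rw [hc]; field_simp; ring]
    exact sqrt_sq (by positivity)
  rw [cos_add_arccos (by linarith) hinv₁, cos_arccos_three_mul_sq_add_one_div hρ, sin_arccos,
    hsqrt]
  field_simp
  ring

theorem tangentCapArea_eq_sphericalCapArea {ρ : ℝ} (hρ : 1 ≤ ρ) :
    tangentCapArea ρ (arccos ((3 * ρ ^ 2 + 1) / (ρ * (ρ ^ 2 + 3)))) =
      sphericalCapArea (arccos ((3 * ρ ^ 2 + 1) / (ρ * (ρ ^ 2 + 3)))) := by
  have hρ0 : 0 < ρ := by linarith
  rw [tangentCapArea, sphericalCapArea, cos_arccos_add_arccos_inv hρ,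
    cos_arccos_three_mul_sq_add_one_div hρ]
  field_simp
  ring

theorem stmt19_general (ρ : ℝ) (hρ1 : 1 < ρ)
    (αmin α₀ αmax : ℝ)
    (hαmax : αmax = Real.arccos (1 / ρ))
    (hαmin : αmin = Real.arccos ((3 - ρ) / (1 + ρ)) - Real.arccos (1 / ρ))
    (hα₀ : α₀ = Real.arccos ((3 * ρ ^ 2 + 1) / (ρ * (ρ ^ 2 + 3))))
    (K : ℝ → ℝ)
    (hK : ∀ α, K α = if α < α₀ then
        2 * π * (1 - ((ρ ^ 2 - 1) *
          ((1 / ρ) * Real.cos α - Real.sqrt (1 - 1 / ρ ^ 2) * Real.sin α + 1) + 4)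
          / (4 * ρ))
      else 2 * π * (1 - Real.cos α)) :
    2 * π * (1 - Real.cos α₀) =
      2 * π * (1 - ((ρ ^ 2 - 1) *
        ((1 / ρ) * Real.cos α₀ - Real.sqrt (1 - 1 / ρ ^ 2) * Real.sin α₀ + 1) + 4)
        / (4 * ρ)) ∧
    MonotoneOn K (Set.Icc αmin αmax) ∧
    ContinuousAt K α₀ := by
  have hK' : K = fun α => if α < α₀ then tangentCapArea ρ α else sphericalCapArea α := by
    funext α
    rw [hK, tangentCapArea_eq hρ1.le, sphericalCapArea]
  have hglue : tangentCapArea ρ α₀ = sphericalCapArea α₀ :=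
    hα₀ ▸ tangentCapArea_eq_sphericalCapArea hρ1.le
  refine ⟨?_, ?_, ?_⟩
  · rw [← tangentCapArea_eq hρ1.le, hglue, sphericalCapArea]
  · rw [hK']
    refine monotoneOn_ite_Icc ((monotoneOn_tangentCapArea hρ1.le).mono (Icc_subset_Icc ?_ ?_))
      (monotoneOn_sphericalCapArea.mono (Icc_subset_Icc ?_ ?_)) hglue
    · rw [hαmin]; linarith [arccos_nonneg ((3 - ρ) / (1 + ρ))]
    · have h₀ : α₀ ≤ π / 2 := hα₀ ▸ arccos_le_pi_div_two.2 (by positivity)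
      have hβ : arccos (1 / ρ) ≤ π / 2 := arccos_le_pi_div_two.2 (by positivity)
      linarith
    · exact hα₀ ▸ arccos_nonneg _
    · exact hαmax ▸ arccos_le_pi _
  · rw [hK']
    exact (continuous_ite_lt (continuous_tangentCapArea ρ) continuous_sphericalCapArea
      hglue).continuousAt

/-- the area function `K`.  For `ρ ∈ (1,3)`, set
`α₀ = arccos((3ρ²+1)/(ρ(ρ²+3)))`, `α_max = arccos(1/ρ)`,
`α_min = arccos((3-ρ)/(1+ρ)) - arccos(1/ρ)`, and let
`K(α) = 2π(1-cos α)` for `α ∈ [α₀, α_max]` (where the actual cap and auxiliary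
cap coincide) and
`K(α) = 2π(1 - ((ρ²-1)((1/ρ)cos α - √(1-1/ρ²) sin α + 1) + 4)/(4ρ))`
for `α ∈ [α_min, α₀]`.  Then the two formulas agree at `α₀`, and `K` is
non-decreasing on `[α_min, α_max]` and continuous at `α₀`. -/
theorem stmt19 (ρ : ℝ) (hρ1 : 1 < ρ) (hρ3 : ρ < 3)
    (αmin α₀ αmax : ℝ)
    (hαmax : αmax = Real.arccos (1 / ρ))
    (hαmin : αmin = Real.arccos ((3 - ρ) / (1 + ρ)) - Real.arccos (1 / ρ))
    (hα₀ : α₀ = Real.arccos ((3 * ρ ^ 2 + 1) / (ρ * (ρ ^ 2 + 3))))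
    (K : ℝ → ℝ)
    (hK : ∀ α, K α = if α < α₀ then
        2 * π * (1 - ((ρ ^ 2 - 1) *
          ((1 / ρ) * Real.cos α - Real.sqrt (1 - 1 / ρ ^ 2) * Real.sin α + 1) + 4)
          / (4 * ρ))
      else 2 * π * (1 - Real.cos α)) :
    2 * π * (1 - Real.cos α₀) =
      2 * π * (1 - ((ρ ^ 2 - 1) *
        ((1 / ρ) * Real.cos α₀ - Real.sqrt (1 - 1 / ρ ^ 2) * Real.sin α₀ + 1) + 4)
        / (4 * ρ)) ∧
    MonotoneOn K (Set.Icc αmin αmax) ∧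
    ContinuousAt K α₀ :=
  stmt19_general ρ hρ1 αmin α₀ αmax hαmax hαmin hα₀ K hK
end
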